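/- arXiv:1703.09032 — 3 statements merged into one kernel-verified Lean document; each statement's English description precedes it below -/
import Mathlib

section
/- Let Γ be a connected finite simplicial graph that is not a join, and let H be an infinite proper malnormal subgroup of the right-angled Coxeter group G_Γ. Then H is join-free, i.e., no infinite-order element of H is conjugate in G_Γ to an element of a join subgroup. -/
open scoped Pointwise ENNReal

namespace RACGPaper

/-- The defining relations of the right-angled Coxeter group of a simple graph. -/
def racgRels {V : Type*} (Γ : SimpleGraph V) : Set (FreeGroup V) :=
  {r | (∃ v : V, r = FreeGroup.of v * FreeGroup.of v) ∨
       (∃ v w : V, Γ.Adj v w ∧ r = (FreeGroup.of v * FreeGroup.of w) ^ 2)}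

/-- The right-angled Coxeter group of a simple graph. -/
def RACG {V : Type*} (Γ : SimpleGraph V) : Type _ := PresentedGroup (racgRels Γ)

instance {V : Type*} (Γ : SimpleGraph V) : Group (RACG Γ) :=
  inferInstanceAs (Group (PresentedGroup (racgRels Γ)))

/-- The generator of `RACG Γ` corresponding to a vertex. -/
def gen {V : Type*} (Γ : SimpleGraph V) (v : V) : RACG Γ := PresentedGroup.of v

/-- Word length with respect to the vertex generators (which are involutions). -/
noncomputable def len {V : Type*} (Γ : SimpleGraph V) (g : RACG Γ) : ℕ :=
  sInf {n | ∃ l : List V, l.length = n ∧ (l.map (gen Γ)).prod = g}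

/-- The word metric on `RACG Γ`. -/
noncomputable def wdist {V : Type*} (Γ : SimpleGraph V) (g h : RACG Γ) : ℕ :=
  len Γ (g⁻¹ * h)

/-- Distance from a point to a subgroup. -/
noncomputable def distH {V : Type*} (Γ : SimpleGraph V) (H : Subgroup (RACG Γ))
    (x : RACG Γ) : ℕ :=
  sInf {n | ∃ h ∈ H, wdist Γ x h = n}

/-- A `(K, C)`-quasi-geodesic defined on the integer interval `[a, b]`. -/
def IsQuasiGeodesic {V : Type*} (Γ : SimpleGraph V) (K C : ℝ) (a b : ℤ)
    (γ : ℤ → RACG Γ) : Prop :=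
  ∀ i ∈ Set.Icc a b, ∀ j ∈ Set.Icc a b,
    |(i : ℝ) - (j : ℝ)| / K - C ≤ (wdist Γ (γ i) (γ j) : ℝ) ∧
    (wdist Γ (γ i) (γ j) : ℝ) ≤ K * |(i : ℝ) - (j : ℝ)| + C

/-- A subgroup is strongly quasiconvex if every quasi-geodesic with endpoints on it
stays uniformly close to it. -/
def StronglyQuasiconvex {V : Type*} (Γ : SimpleGraph V) (H : Subgroup (RACG Γ)) : Prop :=
  ∀ K C : ℝ, 1 ≤ K → 0 ≤ C → ∃ M : ℝ, 0 ≤ M ∧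
    ∀ (a b : ℤ) (γ : ℤ → RACG Γ), IsQuasiGeodesic Γ K C a b γ →
      γ a ∈ H → γ b ∈ H → ∀ i ∈ Set.Icc a b, (distH Γ H (γ i) : ℝ) ≤ M

/-- `H` is malnormal: `gHg⁻¹ ∩ H = {1}` for every `g ∉ H`. -/
def Malnormal {G : Type*} [Group G] (H : Subgroup G) : Prop :=
  ∀ g : G, g ∉ H → ∀ x : G, x ∈ H → g⁻¹ * x * g ∈ H → x = 1

/-- `H` is almost malnormal: `gHg⁻¹ ∩ H` is finite for every `g ∉ H`. -/
def AlmostMalnormal {G : Type*} [Group G] (H : Subgroup G) : Prop :=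
  ∀ g : G, g ∉ H → {x : G | x ∈ H ∧ g⁻¹ * x * g ∈ H}.Finite

/-- An almost malnormal collection of subgroups. -/
def AlmostMalnormalColl {G : Type*} [Group G] (𝓗 : Set (Subgroup G)) : Prop :=
  ∀ H ∈ 𝓗, ∀ H' ∈ 𝓗, ∀ g : G,
    {x : G | x ∈ H ∧ g⁻¹ * x * g ∈ (H' : Subgroup G)}.Infinite → H = H' ∧ g ∈ H

/-- A group is virtually free if it has a free subgroup of finite index. -/
def VirtuallyFree (G : Type*) [Group G] : Prop :=
  ∃ F : Subgroup G, F.FiniteIndex ∧ IsFreeGroup F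

/-- A set of vertices spans a join subgraph. -/
def IsJoin {V : Type*} (Γ : SimpleGraph V) (J : Set V) : Prop :=
  ∃ V₁ V₂ : Set V, V₁.Nonempty ∧ V₂.Nonempty ∧ Disjoint V₁ V₂ ∧ V₁ ∪ V₂ = J ∧
    ∀ v ∈ V₁, ∀ w ∈ V₂, Γ.Adj v w

/-- The special subgroup generated by a set of vertices. -/
def special {V : Type*} (Γ : SimpleGraph V) (S₁ : Set V) : Subgroup (RACG Γ) :=
  Subgroup.closure (gen Γ '' S₁)

/-- The conjugate subgroup `gHg⁻¹`. -/
def conjSubgroup {G : Type*} [Group G] (g : G) (H : Subgroup G) : Subgroup G :=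
  H.map (MulAut.conj g).toMonoidHom

/-- `x` lies in some join subgroup of `RACG Γ`. -/
def InJoinSubgroup {V : Type*} (Γ : SimpleGraph V) (x : RACG Γ) : Prop :=
  ∃ J : Set V, IsJoin Γ J ∧ x ∈ special Γ J

/-- An infinite subgroup is join-free if none of its infinite-order elements is
conjugate into a join subgroup. -/
def JoinFree {V : Type*} (Γ : SimpleGraph V) (H : Subgroup (RACG Γ)) : Prop :=
  (H : Set (RACG Γ)).Infinite ∧
    ∀ h ∈ H, ¬ IsOfFinOrder h → ∀ g : RACG Γ, ¬ InJoinSubgroup Γ (g * h * g⁻¹)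

/-- The star of a vertex: the vertex together with its neighbours. -/
def starSet {V : Type*} (Γ : SimpleGraph V) (v : V) : Set V :=
  {v} ∪ {w | Γ.Adj v w}

/-- `x` lies in some star subgroup of `RACG Γ`. -/
def InStarSubgroup {V : Type*} (Γ : SimpleGraph V) (x : RACG Γ) : Prop :=
  ∃ v : V, x ∈ special Γ (starSet Γ v)

/-- An infinite subgroup is star-free if none of its infinite-order elements is
conjugate into a star subgroup. -/
def StarFree {V : Type*} (Γ : SimpleGraph V) (H : Subgroup (RACG Γ)) : Prop :=
  (H : Set (RACG Γ)).Infinite ∧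
    ∀ h ∈ H, ¬ IsOfFinOrder h → ∀ g : RACG Γ, ¬ InStarSubgroup Γ (g * h * g⁻¹)

/-- Word length with respect to a (symmetrized) set `T` of group elements. -/
noncomputable def wlen {G : Type*} [Group G] (T : Set G) (g : G) : ℕ :=
  sInf {n | ∃ l : List G, (∀ x ∈ l, x ∈ T ∨ x⁻¹ ∈ T) ∧ l.length = n ∧ l.prod = g}

/-- A finitely generated subgroup of `RACG Γ` is undistorted if the inclusion is a
quasi-isometric embedding with respect to word metrics. -/
def Undistorted {V : Type*} (Γ : SimpleGraph V) (H : Subgroup (RACG Γ)) : Prop :=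
  ∃ T : Finset (RACG Γ), (T : Set (RACG Γ)) ⊆ (H : Set (RACG Γ)) ∧
    Subgroup.closure (T : Set (RACG Γ)) = H ∧
    ∃ K C : ℝ, 1 ≤ K ∧ 0 ≤ C ∧ ∀ h ∈ H,
      (wlen (T : Set (RACG Γ)) h : ℝ) / K - C ≤ (len Γ h : ℝ) ∧
      (len Γ h : ℝ) ≤ K * (wlen (T : Set (RACG Γ)) h : ℝ) + C

/-- A subgroup is stable if it is undistorted and quasi-geodesics with common
endpoints on it uniformly fellow-travel. -/
def Stable {V : Type*} (Γ : SimpleGraph V) (H : Subgroup (RACG Γ)) : Prop :=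
  Undistorted Γ H ∧ ∀ K C : ℝ, 1 ≤ K → 0 ≤ C → ∃ M : ℝ, 0 ≤ M ∧
    ∀ (a b a' b' : ℤ) (γ γ' : ℤ → RACG Γ),
      IsQuasiGeodesic Γ K C a b γ → IsQuasiGeodesic Γ K C a' b' γ' →
      γ a = γ' a' → γ b = γ' b' → γ a ∈ H → γ b ∈ H →
      (∀ i ∈ Set.Icc a b, ∃ j ∈ Set.Icc a' b', (wdist Γ (γ i) (γ' j) : ℝ) ≤ M) ∧
      (∀ j ∈ Set.Icc a' b', ∃ i ∈ Set.Icc a b, (wdist Γ (γ i) (γ' j) : ℝ) ≤ M)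

/-- `H` is `N`-join-busting: every join subword of a reduced word representing an
element of `H` has length at most `N`. -/
def JoinBusting {V : Type*} (Γ : SimpleGraph V) (H : Subgroup (RACG Γ)) (N : ℕ) : Prop :=
  ∀ h ∈ H, ∀ w : List V, (w.map (gen Γ)).prod = h → w.length = len Γ h →
    ∀ β : List V, β <:+: w → InJoinSubgroup Γ (β.map (gen Γ)).prod → β.length ≤ N

/-- `a b c d` is an induced four-cycle (in this cyclic order), with diagonals
`(a, c)` and `(b, d)`. -/
def IsInducedFourCycle {V : Type*} (Γ : SimpleGraph V) (a b c d : V) : Prop :=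
  a ≠ c ∧ b ≠ d ∧ ¬ Γ.Adj a c ∧ ¬ Γ.Adj b d ∧
    Γ.Adj a b ∧ Γ.Adj b c ∧ Γ.Adj c d ∧ Γ.Adj d a

/-- A set of vertices is the vertex set of an induced four-cycle. -/
def IsFourCycleSet {V : Type*} (Γ : SimpleGraph V) (Q : Set V) : Prop :=
  ∃ a b c d : V, Q = {a, b, c, d} ∧ IsInducedFourCycle Γ a b c d

/-- The four-cycle graph `Γ⁴`: vertices are induced four-cycles of `Γ`, adjacent
when they share a pair of non-adjacent vertices. -/
def fourCycleGraph {V : Type*} (Γ : SimpleGraph V) :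
    SimpleGraph {Q : Set V // IsFourCycleSet Γ Q} :=
  SimpleGraph.fromRel (fun Q Q' => ∃ u v : V, u ≠ v ∧ ¬ Γ.Adj u v ∧
    u ∈ (Q : Set V) ∩ (Q' : Set V) ∧ v ∈ (Q : Set V) ∩ (Q' : Set V))

/-- A connected component of `Γ⁴` whose support is the whole vertex set of `Γ`. -/
def FullSupportComponent {V : Type*} (Γ : SimpleGraph V)
    (C : (fourCycleGraph Γ).ConnectedComponent) : Prop :=
  ∀ v : V, ∃ Q : {Q : Set V // IsFourCycleSet Γ Q},
    (fourCycleGraph Γ).connectedComponentMk Q = C ∧ v ∈ (Q : Set V)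

/-- `Γ` is CFS: some component of `Γ⁴` has full support. -/
def CFS {V : Type*} (Γ : SimpleGraph V) : Prop :=
  ∃ C : (fourCycleGraph Γ).ConnectedComponent, FullSupportComponent Γ C

/-- Length (number of edges) of a shortest edge path from `x` to `y` in the Cayley
graph all of whose vertices are at distance at least `c` from `H`. -/
noncomputable def avoidDist {V : Type*} (Γ : SimpleGraph V) (H : Subgroup (RACG Γ))
    (c : ℝ) (x y : RACG Γ) : ℝ≥0∞ :=
  ⨅ (l : List (RACG Γ)) (_ : l.head? = some x) (_ : l.getLast? = some y)
    (_ : l.Chain' fun a b => wdist Γ a b = 1)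
    (_ : ∀ z ∈ l, c ≤ (distH Γ H z : ℝ)), ((l.length - 1 : ℕ) : ℝ≥0∞)

/-- The subgroup divergence functions `σⁿ_ρ` of `H` in `RACG Γ`. -/
noncomputable def divFun {V : Type*} (Γ : SimpleGraph V) (H : Subgroup (RACG Γ))
    (ρ : ℝ) (n : ℕ) (r : ℝ) : ℝ≥0∞ :=
  ⨅ (x : RACG Γ) (y : RACG Γ) (_ : (distH Γ H x : ℝ) = r)
    (_ : (distH Γ H y : ℝ) = r) (_ : avoidDist Γ H r x y ≠ ⊤)
    (_ : (n : ℝ) * r ≤ (wdist Γ x y : ℝ)), avoidDist Γ H (ρ * r) x y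

/-- Domination of functions: `f(x) ≤ A g(Bx) + Cx` for large `x`. -/
def FunDom (f g : ℝ → ℝ≥0∞) : Prop :=
  ∃ A B C D : ℝ, 0 < A ∧ 0 < B ∧ 0 < C ∧ 0 < D ∧
    ∀ x : ℝ, D < x → f x ≤ ENNReal.ofReal A * g (B * x) + ENNReal.ofReal (C * x)

/-- Domination of families of divergence functions. -/
def FamDom (δ δ' : ℝ → ℕ → ℝ → ℝ≥0∞) : Prop :=
  ∃ L : ℝ, L ∈ Set.Ioc (0 : ℝ) 1 ∧ ∃ M : ℕ, 0 < M ∧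
    ∀ ρ ∈ Set.Ioc (0 : ℝ) 1, ∀ n : ℕ, 2 ≤ n → FunDom (δ (L * ρ) n) (δ' ρ (M * n))

/-- A family of divergence functions is equivalent to a single function. -/
def FamEquivFun (δ : ℝ → ℕ → ℝ → ℝ≥0∞) (f : ℝ → ℝ≥0∞) : Prop :=
  FamDom δ (fun _ _ => f) ∧ FamDom (fun _ _ => f) δ

/-- Height at most `n`: any `n+1` pairwise distinct cosets give conjugates with
finite total intersection. -/
def HeightAtMost {G : Type*} [Group G] (H : Subgroup G) (n : ℕ) : Prop :=
  ∀ f : Fin (n + 1) → G, (∀ i j, i ≠ j → (f i)⁻¹ * f j ∉ H) →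
    {x : G | ∀ i, (f i)⁻¹ * x * f i ∈ H}.Finite

/-- `H` has finite height in `G`. -/
def FiniteHeight {G : Type*} [Group G] (H : Subgroup G) : Prop :=
  ∃ n : ℕ, HeightAtMost H n

end RACGPaper


/-!
In a malnormal subgroup `K`, any element commuting with a nontrivial element of `K` lies in `K`.
Conjugating `H` so that a nontrivial element `x = a * b` of a join subgroup `G_{V₁} * G_{V₂}` lies
in it, this puts a vertex generator in the conjugate: a generator of `V₂` if `b = 1`, and otherwise
first `b` (which commutes with `x`) and then a generator of `V₁`. Generators of adjacent vertices
commute, so by connectedness every generator, hence the whole group, lies in the conjugate,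
contradicting properness.
-/

namespace RACGPaper

section Malnormal

variable {G : Type*} [Group G] {H : Subgroup G}

theorem Malnormal.mem_of_commute (hH : Malnormal H) {y t : G} (hy : y ∈ H) (hy1 : y ≠ 1)
    (hc : Commute t y) : t ∈ H := by
  by_contra ht
  refine hy1 (hH t ht y hy ?_)
  rwa [mul_assoc, ← hc.eq, inv_mul_cancel_left]

theorem mem_conjSubgroup_iff {g x : G} : x ∈ conjSubgroup g H ↔ g⁻¹ * x * g ∈ H := by
  rw [conjSubgroup, Subgroup.mem_map_equiv, MulAut.conj_symm_apply]

theorem Malnormal.conjSubgroup (hH : Malnormal H) (g : G) : Malnormal (conjSubgroup g H) := by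
  intro k hk x hx hkx
  rw [mem_conjSubgroup_iff] at hk hx hkx
  have hx1 : g⁻¹ * x * g = 1 := hH _ hk _ hx (by convert hkx using 1; group)
  calc x = g * (g⁻¹ * x * g) * g⁻¹ := by group
    _ = 1 := by rw [hx1]; group

theorem conjSubgroup_eq_top_iff {g : G} : conjSubgroup g H = ⊤ ↔ H = ⊤ := by
  simp only [Subgroup.eq_top_iff', mem_conjSubgroup_iff]
  exact ⟨fun h x => by simpa [mul_assoc] using h (g * x * g⁻¹), fun h x => h _⟩

end Malnormal

variable {V : Type*} {Γ : SimpleGraph V}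

theorem mk_eq_one_of_mem_racgRels {r : FreeGroup V} (hr : r ∈ racgRels Γ) :
    (PresentedGroup.mk (racgRels Γ) r : RACG Γ) = 1 :=
  PresentedGroup.one_of_mem hr

theorem gen_mul_self (v : V) : gen Γ v * gen Γ v = 1 := by
  have := mk_eq_one_of_mem_racgRels (Γ := Γ) (Or.inl ⟨v, rfl⟩)
  rwa [map_mul] at this

theorem gen_inv (v : V) : (gen Γ v)⁻¹ = gen Γ v :=
  inv_eq_of_mul_eq_one_right (gen_mul_self v)

theorem gen_commute {v w : V} (h : Γ.Adj v w) : Commute (gen Γ v) (gen Γ w) := by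
  have hsq : (gen Γ v * gen Γ w) * (gen Γ v * gen Γ w) = 1 := by
    have := mk_eq_one_of_mem_racgRels (Γ := Γ) (Or.inr ⟨v, w, h, rfl⟩)
    rwa [map_pow, map_mul, sq] at this
  calc gen Γ v * gen Γ w = (gen Γ v * gen Γ w)⁻¹ := (inv_eq_of_mul_eq_one_right hsq).symm
    _ = gen Γ w * gen Γ v := by rw [mul_inv_rev, gen_inv, gen_inv]

theorem gen_ne_one (v : V) : gen Γ v ≠ 1 := by
  have hrel : ∀ r ∈ racgRels Γ, FreeGroup.lift (fun _ : V => (-1 : ℤˣ)) r = 1 := by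
    rintro r (⟨w, rfl⟩ | ⟨w, u, _, rfl⟩) <;> simp
  intro h
  have h1 : PresentedGroup.toGroup hrel (gen Γ v) = 1 :=
    (congrArg (PresentedGroup.toGroup hrel) h).trans (map_one _)
  rw [gen, PresentedGroup.toGroup.of] at h1
  exact absurd h1 (by decide)

theorem special_le_centralizer_special {V₁ V₂ : Set V} (hadj : ∀ v ∈ V₁, ∀ w ∈ V₂, Γ.Adj v w) :
    special Γ V₁ ≤ Subgroup.centralizer (special Γ V₂) := by
  have hgen : special Γ V₂ ≤ Subgroup.centralizer (gen Γ '' V₁) := by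
    refine (Subgroup.closure_le _).mpr ?_
    rintro _ ⟨w, hw, rfl⟩ _ ⟨v, hv, rfl⟩
    exact gen_commute (hadj v hv w hw)
  exact (Subgroup.closure_le _).mpr fun x hx y hy => (hgen hy x hx).symm

theorem special_union (V₁ V₂ : Set V) :
    special Γ (V₁ ∪ V₂) = special Γ V₁ ⊔ special Γ V₂ := by
  rw [special, Set.image_union, Subgroup.closure_union, special, special]

theorem exists_mul_eq_of_mem_special_union {V₁ V₂ : Set V}
    (hadj : ∀ v ∈ V₁, ∀ w ∈ V₂, Γ.Adj v w) {x : RACG Γ} (hx : x ∈ special Γ (V₁ ∪ V₂)) :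
    ∃ a ∈ special Γ V₁, ∃ b ∈ special Γ V₂, a * b = x := by
  have hle : special Γ V₁ ≤ Subgroup.normalizer (special Γ V₂ : Set (RACG Γ)) :=
    (special_le_centralizer_special hadj).trans (Subgroup.centralizer_le_normalizer _)
  rw [special_union, ← SetLike.mem_coe,
    Subgroup.coe_mul_of_left_le_normalizer_right _ _ hle] at hx
  exact Set.mem_mul.mp hx

variable {K : Subgroup (RACG Γ)}

theorem Malnormal.exists_gen_mem_of_inJoinSubgroup (hK : Malnormal K) {x : RACG Γ} (hxK : x ∈ K)
    (hx1 : x ≠ 1) (hx : InJoinSubgroup Γ x) : ∃ v, gen Γ v ∈ K := by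
  obtain ⟨J, ⟨V₁, V₂, ⟨v₁, hv₁⟩, ⟨v₂, hv₂⟩, -, rfl, hadj⟩, hxJ⟩ := hx
  obtain ⟨a, ha, b, hb, rfl⟩ := exists_mul_eq_of_mem_special_union hadj hxJ
  have hcent := special_le_centralizer_special hadj
  by_cases hb1 : b = 1
  · subst hb1
    rw [mul_one] at hxK hx1
    exact ⟨v₂, hK.mem_of_commute hxK hx1 (hcent ha _ (Subgroup.subset_closure ⟨v₂, hv₂, rfl⟩))⟩
  · have hba : Commute b a := hcent ha b hb
    have hbK : b ∈ K := hK.mem_of_commute hxK hx1 (hba.mul_right (Commute.refl b))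
    refine ⟨v₁, hK.mem_of_commute hbK hb1 ?_⟩
    exact (hcent (Subgroup.subset_closure ⟨v₁, hv₁, rfl⟩) b hb).symm

theorem Malnormal.eq_top_of_gen_mem (hK : Malnormal K) (hΓ : Γ.Preconnected) {u : V}
    (hu : gen Γ u ∈ K) : K = ⊤ := by
  have hwalk : ∀ {w₁ w₂ : V}, Γ.Walk w₁ w₂ → gen Γ w₁ ∈ K → gen Γ w₂ ∈ K := by
    intro w₁ w₂ p
    induction p with
    | nil => exact id
    | cons hadj _ ih =>
      exact fun hw => ih (hK.mem_of_commute hw (gen_ne_one _) (gen_commute hadj).symm)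
  refine eq_top_iff.mpr fun x _ => PresentedGroup.generated_by _ K (fun v => ?_) x
  exact hwalk (hΓ u v).some hu

end RACGPaper

open RACGPaper in
theorem malnormal_joinFree_general
    {V : Type*} (Γ : SimpleGraph V) (hconn : Γ.Connected)
    (H : Subgroup (RACG Γ))
    (hinf : (H : Set (RACG Γ)).Infinite) (hproper : H ≠ ⊤)
    (hmal : Malnormal H) : JoinFree Γ H := by
  refine ⟨hinf, fun h hH hord g hjoin => hproper ?_⟩
  have hK := hmal.conjSubgroup g
  have hxK : g * h * g⁻¹ ∈ conjSubgroup g H := mem_conjSubgroup_iff.mpr (by group; exact hH)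
  have hx1 : g * h * g⁻¹ ≠ 1 := by
    rw [Ne, mul_inv_eq_one, mul_eq_left]
    exact fun h1 => hord (h1 ▸ IsOfFinOrder.one)
  obtain ⟨v, hv⟩ := hK.exists_gen_mem_of_inJoinSubgroup hxK hx1 hjoin
  exact conjSubgroup_eq_top_iff.mp (hK.eq_top_of_gen_mem hconn.preconnected hv)

open RACGPaper in
/-- an infinite proper malnormal subgroup of a RACG with connected
non-join defining graph is join-free. -/
theorem malnormal_joinFree
    {V : Type*} [Fintype V] (Γ : SimpleGraph V) (hconn : Γ.Connected)
    (hnj : ¬ IsJoin Γ (Set.univ : Set V)) (H : Subgroup (RACG Γ))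
    (hinf : (H : Set (RACG Γ)).Infinite) (hproper : H ≠ ⊤)
    (hmal : Malnormal H) : JoinFree Γ H :=
  malnormal_joinFree_general Γ hconn H hinf hproper hmal
end

section
/- Let G be a group and let 𝒜 be a collection of subgroups of G satisfying: (1) for every A ∈ 𝒜 and every g ∈ G, the conjugate g⁻¹Ag belongs to 𝒜 and there is a finite sequence A = A₀, A₁, …, A_n = g⁻¹Ag of subgroups in 𝒜 such that A_{j−1} ∩ A_j is infinite for each j; and (2) for every A ∈ 𝒜, every subgroup of A that has finite height in A is either finite or of finite index in A. Then for every finite height subgroup H of G of infinite index in G, the intersection H ∩ A is finite for all A ∈ 𝒜. -/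
/-!
If `H` meets some `B ∈ 𝒜` in an infinite set, then `H ∩ B` has finite height in `B`, so by (2)
it has finite index in `B`; hence `H` also meets infinitely every `B'` with `B ∩ B'` infinite.
Following the chains of (1) from `A`, `H` meets every conjugate `g⁻¹Ag` infinitely, i.e.
every `gHg⁻¹ ∩ A` has finite index in `A`. As `H` has infinite index there are `n + 1`
distinct cosets `gᵢH`, and `⋂ gᵢHg⁻¹ᵢ` contains a finite-index subgroup of the infinite group
`A`, contradicting height at most `n`.
-/

open scoped Pointwise ENNReal

namespace List

theorem IsChain.getLast?_induction {α : Type*} {r : α → α → Prop} (p : α → Prop) {l : List α}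
    (h : IsChain r l) (carries : ∀ x ∈ l, ∀ y, r x y → p x → p y) {a b : α}
    (ha : l.head? = some a) (hb : l.getLast? = some b) (initial : p a) : p b := by
  refine (IsChain.iff_mem.mp h).induction p l (fun x y hxy => carries x hxy.1 y hxy.2.2) ?_ b
    (mem_of_getLast? hb)
  intro hl
  rwa [(head_eq_iff_head?_eq_some hl).mpr ha]

end List

namespace Subgroup

variable {G : Type*} [Group G] {H K L : Subgroup G}

theorem infinite_inter_of_relIndex_ne_zero (hH : H.relIndex K ≠ 0) (hK : (K : Set G).Infinite) :
    ((H : Set G) ∩ K).Infinite := by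
  intro hfin
  have hcard : Nat.card ↥(H ⊓ K) * H.relIndex K = Nat.card K := by
    rw [← relIndex_bot_left, ← inf_relIndex_right H K,
      relIndex_mul_relIndex _ _ _ bot_le inf_le_right, relIndex_bot_left]
  have : Finite ↥(H ⊓ K) := by rw [← coe_inf] at hfin; exact hfin.to_subtype
  exact hK (Set.finite_coe_iff.mp (Nat.finite_of_card_ne_zero
    (hcard ▸ mul_ne_zero Nat.card_pos.ne' hH)))

theorem infinite_inter_of_relIndex_ne_zero_of_infinite_inter (hH : H.relIndex K ≠ 0)
    (hKL : ((K : Set G) ∩ L).Infinite) : ((H : Set G) ∩ L).Infinite := by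
  have hHKL : H.relIndex (K ⊓ L) ≠ 0 := mt (relIndex_eq_zero_of_le_right inf_le_left) hH
  exact (infinite_inter_of_relIndex_ne_zero hHKL (by rwa [coe_inf])).mono
    (Set.inter_subset_inter_right _ (by simp))

theorem exists_pairwise_inv_mul_notMem (hH : ¬ H.FiniteIndex) (n : ℕ) :
    ∃ f : Fin n → G, ∀ i j, i ≠ j → (f i)⁻¹ * f j ∉ H := by
  have : Infinite (G ⧸ H) := index_eq_zero_iff_infinite.mp (by_contra fun h => hH ⟨h⟩)
  let e : Fin n ↪ G ⧸ H := Fin.valEmbedding.trans (Infinite.natEmbedding _)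
  refine ⟨fun i => (e i).out, fun i j hij hmem => hij (e.injective ?_)⟩
  rw [← QuotientGroup.out_eq' (e i), ← QuotientGroup.out_eq' (e j)]
  exact QuotientGroup.eq.mpr hmem

end Subgroup

namespace RACGPaper

variable {G : Type*} [Group G]

theorem mem_conjSubgroup {g x : G} {H : Subgroup G} :
    x ∈ conjSubgroup g H ↔ g⁻¹ * x * g ∈ H := by
  simp only [conjSubgroup, Subgroup.mem_map, MulEquiv.coe_toMonoidHom, MulAut.conj_apply]
  constructor
  · rintro ⟨y, hy, rfl⟩
    simpa [mul_assoc] using hy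
  · exact fun hx => ⟨_, hx, by group⟩

theorem conjSubgroup_conjSubgroup_inv (g : G) (A : Subgroup G) :
    conjSubgroup g (conjSubgroup g⁻¹ A) = A := by
  ext x
  simp [mem_conjSubgroup, mul_assoc]

theorem relIndex_conjSubgroup (g : G) (H K : Subgroup G) :
    (conjSubgroup g H).relIndex (conjSubgroup g K) = H.relIndex K :=
  Subgroup.relIndex_map_map_of_injective H K (MulAut.conj g).injective

theorem HeightAtMost.subgroupOf {H : Subgroup G} {n : ℕ} (h : HeightAtMost H n) (K : Subgroup G) :
    HeightAtMost (H.subgroupOf K) n := by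
  intro f hf
  refine (h (fun i => f i) fun i j hij hmem => hf i j hij ?_).preimage Subtype.val_injective.injOn
  simpa [Subgroup.mem_subgroupOf] using hmem

theorem FiniteHeight.subgroupOf {H : Subgroup G} (h : FiniteHeight H) (K : Subgroup G) :
    FiniteHeight (H.subgroupOf K) :=
  h.imp fun _ hn => hn.subgroupOf K

theorem relIndex_ne_zero_of_finiteHeight {H A : Subgroup G}
    (hA : ∀ B : Subgroup A, FiniteHeight B → (B : Set A).Finite ∨ B.FiniteIndex)
    (hH : FiniteHeight H) (hHA : ((H : Set G) ∩ A).Infinite) : H.relIndex A ≠ 0 := by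
  rcases hA _ (hH.subgroupOf A) with hfin | hfi
  · refine absurd (hfin.image Subtype.val) (hHA.mono ?_)
    rintro x ⟨hxH, hxA⟩
    exact ⟨⟨x, hxA⟩, Subgroup.mem_subgroupOf.mpr hxH, rfl⟩
  · exact hfi.index_ne_zero

theorem infinite_inter_of_finiteHeight_of_infinite_inter {H B B' : Subgroup G}
    (hB : ∀ C : Subgroup B, FiniteHeight C → (C : Set B).Finite ∨ C.FiniteIndex)
    (hH : FiniteHeight H) (hHB : ((H : Set G) ∩ B).Infinite) (hBB' : ((B : Set G) ∩ B').Infinite) :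
    ((H : Set G) ∩ B').Infinite :=
  Subgroup.infinite_inter_of_relIndex_ne_zero_of_infinite_inter
    (relIndex_ne_zero_of_finiteHeight hB hH hHB) hBB'

theorem HeightAtMost.finite_iInf_conjSubgroup {H : Subgroup G} {n : ℕ} (h : HeightAtMost H n)
    {f : Fin (n + 1) → G} (hf : ∀ i j, i ≠ j → (f i)⁻¹ * f j ∉ H) :
    ((⨅ i, conjSubgroup (f i) H : Subgroup G) : Set G).Finite :=
  (h f hf).subset fun x hx => by simpa [mem_conjSubgroup] using hx

end RACGPaper

open RACGPaper in
/-- under conditions (1) and (2) on the collection `𝒜`, every finite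
height subgroup of infinite index meets each member of `𝒜` in a finite set. -/
theorem finiteHeight_infiniteIndex_finite_intersection
    {G : Type*} [Group G] (𝒜 : Set (Subgroup G))
    (h1 : ∀ A ∈ 𝒜, ∀ g : G, conjSubgroup g⁻¹ A ∈ 𝒜 ∧
        ∃ l : List (Subgroup G), (∀ B ∈ l, B ∈ 𝒜) ∧ l.head? = some A ∧
          l.getLast? = some (conjSubgroup g⁻¹ A) ∧
          l.Chain' fun B B' => ((B : Set G) ∩ (B' : Set G)).Infinite)
    (h2 : ∀ A ∈ 𝒜, ∀ B : Subgroup ↥A, FiniteHeight B →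
        (B : Set ↥A).Finite ∨ B.FiniteIndex)
    (H : Subgroup G) (hH : FiniteHeight H) (hInf : ¬ H.FiniteIndex) :
    ∀ A ∈ 𝒜, ((H : Set G) ∩ (A : Set G)).Finite := by
  intro A hA
  refine Set.not_infinite.mp fun hHA => ?_
  have hconj : ∀ g : G, (conjSubgroup g H).relIndex A ≠ 0 := by
    intro g
    obtain ⟨hgA, l, hl, hhead, hlast, hchain⟩ := h1 A hA g
    -- `hchain` is stated for `l` coerced to `List (Set G)` through the list monad.
    have hchain' : l.IsChain fun B B' : Subgroup G => ((B : Set G) ∩ B').Infinite :=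
      (List.isChain_map _).mp (by rw [List.map_eq_flatMap]; exact hchain)
    have hHgA : ((H : Set G) ∩ conjSubgroup g⁻¹ A).Infinite :=
      hchain'.getLast?_induction (fun B : Subgroup G => ((H : Set G) ∩ B).Infinite)
        (fun B hB _ hBB' hHB => infinite_inter_of_finiteHeight_of_infinite_inter
          (h2 B (hl B hB)) hH hHB hBB') hhead hlast hHA
    rw [← conjSubgroup_conjSubgroup_inv g A, relIndex_conjSubgroup]
    exact relIndex_ne_zero_of_finiteHeight (h2 _ hgA) hH hHgA
  obtain ⟨n, hn⟩ := hH
  obtain ⟨f, hf⟩ := Subgroup.exists_pairwise_inv_mul_notMem hInf (n + 1)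
  exact Subgroup.infinite_inter_of_relIndex_ne_zero
    (Subgroup.relIndex_iInf_ne_zero fun i => hconj (f i)) (hHA.mono Set.inter_subset_right)
    ((hn.finite_iInf_conjSubgroup hf).subset Set.inter_subset_left)
end

section
/- Let G₁ and G₂ be groups each containing an element of infinite order, let G = G₁ × G₂, and let H be a finite height subgroup of G containing an element of infinite order. Then H has finite index in G. In particular, if H is an almost malnormal subgroup of G containing an element of infinite order, then H = G. -/
open scoped Pointwise ENNReal

section AuxFHPF

variable {G : Type*} [Group G]

private lemma aux_pow_not_finOrder {a : G} (ha : ¬ IsOfFinOrder a) {d : ℕ} (hd : 0 < d) :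
    ¬ IsOfFinOrder (a ^ d) := fun h => by
  obtain ⟨k, hk, hk1⟩ := isOfFinOrder_iff_pow_eq_one.mp h
  exact ha (isOfFinOrder_iff_pow_eq_one.mpr
    ⟨d * k, Nat.mul_pos hd hk, by rwa [pow_mul]⟩)

private lemma aux_collision {H : Subgroup G} {n : ℕ} (hH : RACGPaper.HeightAtMost H n)
    (t : Fin (n + 1) → G) (w : ℕ → G) (hw : Function.Injective w)
    (hconj : ∀ i k, (t i)⁻¹ * w k * t i ∈ H) :
    ∃ i j, i ≠ j ∧ (t i)⁻¹ * t j ∈ H := by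
  by_contra hcon
  push_neg at hcon
  exact (hH t hcon).not_infinite
    (Set.infinite_of_injective_forall_mem hw (fun k i => hconj i k))

private lemma aux_exists_pow_mem {H : Subgroup G} {n : ℕ}
    (hH : RACGPaper.HeightAtMost H n)
    (w : ℕ → G) (hw : Function.Injective w) (s : G)
    (hconj : ∀ m k : ℕ, (s ^ m)⁻¹ * w k * s ^ m ∈ H) :
    ∃ d : ℕ, 0 < d ∧ s ^ d ∈ H := by
  obtain ⟨i, j, hij, hmem⟩ := aux_collision hH (fun i => s ^ (i : ℕ)) w hw
    (fun i k => hconj i k)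
  have key : ∀ {a b : ℕ}, a < b → (s ^ a)⁻¹ * s ^ b = s ^ (b - a) := by
    intro a b h
    have hb : s ^ b = s ^ a * s ^ (b - a) := by
      rw [← pow_add, Nat.add_sub_cancel' h.le]
    rw [hb, inv_mul_cancel_left]
  rcases lt_or_gt_of_ne (fun h : (i : ℕ) = j => hij (Fin.ext h)) with h | h
  · exact ⟨(j : ℕ) - i, Nat.sub_pos_of_lt h, by rwa [key h] at hmem⟩
  · have hmem' : (s ^ (j : ℕ))⁻¹ * s ^ (i : ℕ) ∈ H := by
      have h2 := H.inv_mem hmem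
      rwa [mul_inv_rev, inv_inv] at h2
    exact ⟨(i : ℕ) - j, Nat.sub_pos_of_lt h, by rwa [key h] at hmem'⟩

variable {G₁ G₂ : Type*} [Group G₁] [Group G₂]

private lemma aux_conj_prod (a : G₁) (b : G₂) (x : G₁ × G₂) :
    ((a, b) : G₁ × G₂)⁻¹ * x * (a, b) = (a⁻¹ * x.1 * a, b⁻¹ * x.2 * b) := rfl

private lemma aux_step_init {H : Subgroup (G₁ × G₂)} {n : ℕ}
    (hH : RACGPaper.HeightAtMost H n) {h : G₁ × G₂} (hhH : h ∈ H)
    (hho : ¬ IsOfFinOrder h) (hcomp : ¬ IsOfFinOrder h.1) :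
    ∃ c : G₁, ¬ IsOfFinOrder c ∧ ((c, (1 : G₂)) : G₁ × G₂) ∈ H := by
  obtain ⟨d, hd, hdH⟩ := aux_exists_pow_mem hH (fun k => h ^ k)
    (fun a b hab => injective_pow_iff_not_isOfFinOrder.mpr hcomp
      (congrArg Prod.fst hab)) ((h.1, 1) : G₁ × G₂)
    (fun m k => by
      have hpm : ((h.1, (1 : G₂)) : G₁ × G₂) ^ m = (h.1 ^ m, 1) :=
        Prod.ext rfl (one_pow m)
      have hconj : (((h.1, (1 : G₂)) : G₁ × G₂) ^ m)⁻¹ * h ^ k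
          * ((h.1, (1 : G₂)) : G₁ × G₂) ^ m = h ^ k := by
        rw [hpm, aux_conj_prod]
        refine Prod.ext ?_ (by simp)
        show (h.1 ^ m)⁻¹ * (h ^ k).1 * h.1 ^ m = (h ^ k).1
        have h1 : (h ^ k).1 = h.1 ^ k := rfl
        rw [h1, mul_assoc, pow_mul_comm, ← mul_assoc, inv_mul_cancel, one_mul]
      rw [hconj]; exact H.pow_mem hhH k)
  refine ⟨h.1 ^ d, aux_pow_not_finOrder hcomp hd, ?_⟩
  have hpd : ((h.1, (1 : G₂)) : G₁ × G₂) ^ d = (h.1 ^ d, 1) :=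
    Prod.ext rfl (one_pow d)
  rwa [hpd] at hdH

private lemma aux_step_init' {H : Subgroup (G₁ × G₂)} {n : ℕ}
    (hH : RACGPaper.HeightAtMost H n) {h : G₁ × G₂} (hhH : h ∈ H)
    (hho : ¬ IsOfFinOrder h) (hcomp : ¬ IsOfFinOrder h.2) :
    ∃ c : G₂, ¬ IsOfFinOrder c ∧ (((1 : G₁), c) : G₁ × G₂) ∈ H := by
  obtain ⟨d, hd, hdH⟩ := aux_exists_pow_mem hH (fun k => h ^ k)
    (fun a b hab => injective_pow_iff_not_isOfFinOrder.mpr hcomp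
      (congrArg Prod.snd hab)) (((1 : G₁), h.2) : G₁ × G₂)
    (fun m k => by
      have hpm : (((1 : G₁), h.2) : G₁ × G₂) ^ m = (1, h.2 ^ m) :=
        Prod.ext (one_pow m) rfl
      have hconj : ((((1 : G₁), h.2) : G₁ × G₂) ^ m)⁻¹ * h ^ k
          * (((1 : G₁), h.2) : G₁ × G₂) ^ m = h ^ k := by
        rw [hpm, aux_conj_prod]
        refine Prod.ext (by simp) ?_
        show (h.2 ^ m)⁻¹ * (h ^ k).2 * h.2 ^ m = (h ^ k).2
        have h2 : (h ^ k).2 = h.2 ^ k := rfl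
        rw [h2, mul_assoc, pow_mul_comm, ← mul_assoc, inv_mul_cancel, one_mul]
      rw [hconj]; exact H.pow_mem hhH k)
  refine ⟨h.2 ^ d, aux_pow_not_finOrder hcomp hd, ?_⟩
  have hpd : (((1 : G₁), h.2) : G₁ × G₂) ^ d = (1, h.2 ^ d) :=
    Prod.ext (one_pow d) rfl
  rwa [hpd] at hdH

private lemma aux_step_swap {H : Subgroup (G₁ × G₂)} {n : ℕ}
    (hH : RACGPaper.HeightAtMost H n) {c : G₁}
    (hc : ¬ IsOfFinOrder c) (hcH : ((c, (1 : G₂)) : G₁ × G₂) ∈ H)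
    {y : G₂} (hy : ¬ IsOfFinOrder y) :
    ∃ c₂ : G₂, ¬ IsOfFinOrder c₂ ∧ (((1 : G₁), c₂) : G₁ × G₂) ∈ H := by
  obtain ⟨d, hd, hdH⟩ := aux_exists_pow_mem hH
    (fun k => ((c ^ k, (1 : G₂)) : G₁ × G₂))
    (fun a b hab => injective_pow_iff_not_isOfFinOrder.mpr hc
      (congrArg Prod.fst hab)) (((1 : G₁), y) : G₁ × G₂)
    (fun m k => by
      have hpm : (((1 : G₁), y) : G₁ × G₂) ^ m = (1, y ^ m) :=
        Prod.ext (one_pow m) rfl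
      have hconj : ((((1 : G₁), y) : G₁ × G₂) ^ m)⁻¹ * (c ^ k, 1)
          * (((1 : G₁), y) : G₁ × G₂) ^ m = ((c ^ k, (1 : G₂)) : G₁ × G₂) := by
        rw [hpm, aux_conj_prod]
        exact Prod.ext (by simp) (by simp)
      rw [hconj]
      have hk : ((c, (1 : G₂)) : G₁ × G₂) ^ k = (c ^ k, 1) :=
        Prod.ext rfl (one_pow k)
      exact hk ▸ H.pow_mem hcH k)
  refine ⟨y ^ d, aux_pow_not_finOrder hy hd, ?_⟩
  have hpd : (((1 : G₁), y) : G₁ × G₂) ^ d = (1, y ^ d) := Prod.ext (one_pow d) rfl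
  rwa [hpd] at hdH

private lemma aux_step_swap' {H : Subgroup (G₁ × G₂)} {n : ℕ}
    (hH : RACGPaper.HeightAtMost H n) {c : G₂}
    (hc : ¬ IsOfFinOrder c) (hcH : (((1 : G₁), c) : G₁ × G₂) ∈ H)
    {y : G₁} (hy : ¬ IsOfFinOrder y) :
    ∃ c₁ : G₁, ¬ IsOfFinOrder c₁ ∧ ((c₁, (1 : G₂)) : G₁ × G₂) ∈ H := by
  obtain ⟨d, hd, hdH⟩ := aux_exists_pow_mem hH
    (fun k => (((1 : G₁), c ^ k) : G₁ × G₂))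
    (fun a b hab => injective_pow_iff_not_isOfFinOrder.mpr hc
      (congrArg Prod.snd hab)) ((y, (1 : G₂)) : G₁ × G₂)
    (fun m k => by
      have hpm : ((y, (1 : G₂)) : G₁ × G₂) ^ m = (y ^ m, 1) :=
        Prod.ext rfl (one_pow m)
      have hconj : (((y, (1 : G₂)) : G₁ × G₂) ^ m)⁻¹ * (1, c ^ k)
          * ((y, (1 : G₂)) : G₁ × G₂) ^ m = (((1 : G₁), c ^ k) : G₁ × G₂) := by
        rw [hpm, aux_conj_prod]
        exact Prod.ext (by simp) (by simp)
      rw [hconj]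
      have hk : (((1 : G₁), c) : G₁ × G₂) ^ k = (1, c ^ k) :=
        Prod.ext (one_pow k) rfl
      exact hk ▸ H.pow_mem hcH k)
  refine ⟨y ^ d, aux_pow_not_finOrder hy hd, ?_⟩
  have hpd : ((y, (1 : G₂)) : G₁ × G₂) ^ d = (y ^ d, 1) := Prod.ext rfl (one_pow d)
  rwa [hpd] at hdH

/-- If `H` contains `(1, c₂)` with `c₂` of infinite order, then the projection of
`H` to the first factor has finite index. -/
private lemma aux_quot_finite₁ {H : Subgroup (G₁ × G₂)} {n : ℕ}
    (hH : RACGPaper.HeightAtMost H n) {c₂ : G₂}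
    (hc : ¬ IsOfFinOrder c₂) (hm : (((1 : G₁), c₂) : G₁ × G₂) ∈ H) :
    Finite (G₁ ⧸ H.comap (MonoidHom.inl G₁ G₂)) := by
  by_contra hfin
  rw [not_finite_iff_infinite] at hfin
  set H₁ := H.comap (MonoidHom.inl G₁ G₂) with hH₁
  let e := Infinite.natEmbedding (G₁ ⧸ H₁)
  obtain ⟨i, j, hij, hmem⟩ := aux_collision hH
    (fun i => (((e (i : ℕ)).out, (1 : G₂)) : G₁ × G₂))
    (fun k => (((1 : G₁), c₂ ^ k) : G₁ × G₂))
    (fun a b hab => injective_pow_iff_not_isOfFinOrder.mpr hc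
      (congrArg Prod.snd hab))
    (fun i k => by
      have hconj : ((((e (i : ℕ)).out, (1 : G₂)) : G₁ × G₂))⁻¹ * (1, c₂ ^ k)
          * ((e (i : ℕ)).out, (1 : G₂)) = (((1 : G₁), c₂ ^ k) : G₁ × G₂) := by
        rw [aux_conj_prod]
        exact Prod.ext (by simp) (by simp)
      rw [hconj]
      have hk : (((1 : G₁), c₂) : G₁ × G₂) ^ k = (1, c₂ ^ k) :=
        Prod.ext (one_pow k) rfl
      exact hk ▸ H.pow_mem hm k)
  have hmem' : (e (i : ℕ)).out⁻¹ * (e (j : ℕ)).out ∈ H₁ := by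
    have heq : ((((e (i : ℕ)).out, (1 : G₂)) : G₁ × G₂))⁻¹
        * ((e (j : ℕ)).out, (1 : G₂))
        = (((e (i : ℕ)).out⁻¹ * (e (j : ℕ)).out, (1 : G₂)) : G₁ × G₂) :=
      Prod.ext rfl (by simp)
    rw [heq] at hmem
    exact hmem
  have : e (i : ℕ) = e (j : ℕ) := by
    rw [← QuotientGroup.out_eq' (e (i : ℕ)), ← QuotientGroup.out_eq' (e (j : ℕ))]
    exact QuotientGroup.eq.mpr hmem'
  exact hij (Fin.ext (e.injective this))

private lemma aux_quot_finite₂ {H : Subgroup (G₁ × G₂)} {n : ℕ}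
    (hH : RACGPaper.HeightAtMost H n) {c₁ : G₁}
    (hc : ¬ IsOfFinOrder c₁) (hm : ((c₁, (1 : G₂)) : G₁ × G₂) ∈ H) :
    Finite (G₂ ⧸ H.comap (MonoidHom.inr G₁ G₂)) := by
  by_contra hfin
  rw [not_finite_iff_infinite] at hfin
  set H₂ := H.comap (MonoidHom.inr G₁ G₂) with hH₂
  let e := Infinite.natEmbedding (G₂ ⧸ H₂)
  obtain ⟨i, j, hij, hmem⟩ := aux_collision hH
    (fun i => (((1 : G₁), (e (i : ℕ)).out) : G₁ × G₂))
    (fun k => ((c₁ ^ k, (1 : G₂)) : G₁ × G₂))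
    (fun a b hab => injective_pow_iff_not_isOfFinOrder.mpr hc
      (congrArg Prod.fst hab))
    (fun i k => by
      have hconj : ((((1 : G₁), (e (i : ℕ)).out) : G₁ × G₂))⁻¹ * (c₁ ^ k, 1)
          * ((1 : G₁), (e (i : ℕ)).out) = ((c₁ ^ k, (1 : G₂)) : G₁ × G₂) := by
        rw [aux_conj_prod]
        exact Prod.ext (by simp) (by simp)
      rw [hconj]
      have hk : ((c₁, (1 : G₂)) : G₁ × G₂) ^ k = (c₁ ^ k, 1) :=
        Prod.ext rfl (one_pow k)
      exact hk ▸ H.pow_mem hm k)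
  have hmem' : (e (i : ℕ)).out⁻¹ * (e (j : ℕ)).out ∈ H₂ := by
    have heq : ((((1 : G₁), (e (i : ℕ)).out) : G₁ × G₂))⁻¹
        * ((1 : G₁), (e (j : ℕ)).out)
        = ((((1 : G₁)), (e (i : ℕ)).out⁻¹ * (e (j : ℕ)).out) : G₁ × G₂) :=
      Prod.ext (by simp) rfl
    rw [heq] at hmem
    exact hmem
  have : e (i : ℕ) = e (j : ℕ) := by
    rw [← QuotientGroup.out_eq' (e (i : ℕ)), ← QuotientGroup.out_eq' (e (j : ℕ))]
    exact QuotientGroup.eq.mpr hmem'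
  exact hij (Fin.ext (e.injective this))

end AuxFHPF

open RACGPaper in
/-- a finite height subgroup of a direct product of two groups with
infinite-order elements that itself contains an infinite-order element has finite
index; if moreover it is almost malnormal, it is the whole group. -/
theorem finiteHeight_product_finiteIndex
    {G₁ G₂ : Type*} [Group G₁] [Group G₂]
    (h1 : ∃ x : G₁, ¬ IsOfFinOrder x) (h2 : ∃ y : G₂, ¬ IsOfFinOrder y)
    (H : Subgroup (G₁ × G₂)) (hfh : FiniteHeight H)
    (hinf : ∃ h ∈ H, ¬ IsOfFinOrder h) :
    H.FiniteIndex ∧ (AlmostMalnormal H → H = ⊤) := by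
  obtain ⟨n, hH⟩ := hfh
  obtain ⟨h, hhH, hho⟩ := hinf
  obtain ⟨x1, hx1⟩ := h1
  obtain ⟨y2, hy2⟩ := h2
  have hcomp' : ¬ IsOfFinOrder h.1 ∨ ¬ IsOfFinOrder h.2 := by
    by_contra hc
    push_neg at hc
    obtain ⟨m, hm, hm1⟩ := isOfFinOrder_iff_pow_eq_one.mp hc.1
    obtain ⟨k, hk, hk1⟩ := isOfFinOrder_iff_pow_eq_one.mp hc.2
    refine hho (isOfFinOrder_iff_pow_eq_one.mpr ⟨m * k, Nat.mul_pos hm hk, ?_⟩)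
    refine Prod.ext ?_ ?_
    · show h.1 ^ (m * k) = 1
      rw [pow_mul, hm1, one_pow]
    · show h.2 ^ (m * k) = 1
      rw [mul_comm, pow_mul, hk1, one_pow]
  have hcd : ∃ (c₁ : G₁) (c₂ : G₂), ¬ IsOfFinOrder c₁ ∧ ¬ IsOfFinOrder c₂ ∧
      ((c₁, (1 : G₂)) : G₁ × G₂) ∈ H ∧ (((1 : G₁), c₂) : G₁ × G₂) ∈ H := by
    rcases hcomp' with h1' | h2'
    · obtain ⟨c₁, hc₁, hc₁H⟩ := aux_step_init hH hhH hho h1'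
      obtain ⟨c₂, hc₂, hc₂H⟩ := aux_step_swap hH hc₁ hc₁H hy2
      exact ⟨c₁, c₂, hc₁, hc₂, hc₁H, hc₂H⟩
    · obtain ⟨c₂, hc₂, hc₂H⟩ := aux_step_init' hH hhH hho h2'
      obtain ⟨c₁, hc₁, hc₁H⟩ := aux_step_swap' hH hc₂ hc₂H hx1
      exact ⟨c₁, c₂, hc₁, hc₂, hc₁H, hc₂H⟩
  obtain ⟨c₁, c₂, hc₁, hc₂, hc₁H, hc₂H⟩ := hcd
  have hQ1 : Finite (G₁ ⧸ H.comap (MonoidHom.inl G₁ G₂)) :=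
    aux_quot_finite₁ hH hc₂ hc₂H
  have hQ2 : Finite (G₂ ⧸ H.comap (MonoidHom.inr G₁ G₂)) :=
    aux_quot_finite₂ hH hc₁ hc₁H
  have hFI1 : (H.comap (MonoidHom.inl G₁ G₂)).FiniteIndex :=
    @Subgroup.finiteIndex_of_finite_quotient _ _ _ hQ1
  have hFI2 : (H.comap (MonoidHom.inr G₁ G₂)).FiniteIndex :=
    @Subgroup.finiteIndex_of_finite_quotient _ _ _ hQ2
  have hle : (H.comap (MonoidHom.inl G₁ G₂)).prod (H.comap (MonoidHom.inr G₁ G₂)) ≤ H := by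
    rintro ⟨x, y⟩ ⟨hx, hy⟩
    have hx' : ((x, (1 : G₂)) : G₁ × G₂) ∈ H := hx
    have hy' : (((1 : G₁), y) : G₁ × G₂) ∈ H := hy
    have hxy : ((x, y) : G₁ × G₂) = (x, 1) * (1, y) := by
      refine Prod.ext ?_ ?_ <;> simp
    rw [hxy]
    exact H.mul_mem hx' hy'
  have hprodFI : ((H.comap (MonoidHom.inl G₁ G₂)).prod
      (H.comap (MonoidHom.inr G₁ G₂))).FiniteIndex := by
    constructor
    rw [Subgroup.index_prod]
    exact Nat.mul_ne_zero hFI1.index_ne_zero hFI2.index_ne_zero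
  have hHFI : H.FiniteIndex := by
    haveI := hprodFI
    exact Subgroup.finiteIndex_of_le hle
  refine ⟨hHFI, fun hAM => ?_⟩
  by_contra hne
  obtain ⟨g, hg⟩ : ∃ g : G₁ × G₂, g ∉ H := by
    by_contra hall
    push_neg at hall
    exact hne ((Subgroup.eq_top_iff' H).mpr hall)
  have hfin := hAM g hg
  let φ : (G₁ × G₂) →* (G₁ × G₂) := (MulAut.conj g⁻¹).toMonoidHom
  have hφsurj : Function.Surjective φ := (MulAut.conj g⁻¹).surjective
  have hidx : (H.comap φ).index = H.index :=
    H.index_comap_of_surjective hφsurj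
  have hcomapFI : (H.comap φ).FiniteIndex := by
    constructor
    rw [hidx]
    exact hHFI.index_ne_zero
  set K := H ⊓ H.comap φ with hK
  have hKFI : K.FiniteIndex := by
    haveI := hHFI
    haveI := hcomapFI
    infer_instance
  have hKsub : (K : Set (G₁ × G₂)) ⊆ {x | x ∈ H ∧ g⁻¹ * x * g ∈ H} := by
    rintro x ⟨hxH, hxφ⟩
    refine ⟨hxH, ?_⟩
    have hx2 : φ x ∈ H := hxφ
    have hφx : φ x = g⁻¹ * x * g := by
      show (MulAut.conj g⁻¹) x = g⁻¹ * x * g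
      simp [MulAut.conj_apply]
    rwa [hφx] at hx2
  have hKfin : Finite K := (hfin.subset hKsub).to_subtype
  haveI := hKFI
  haveI : Finite ((G₁ × G₂) ⧸ K) := inferInstance
  haveI : Finite K := hKfin
  haveI hGfin : Finite (G₁ × G₂) :=
    Finite.of_equiv _ (Subgroup.groupEquivQuotientProdSubgroup (s := K)).symm
  haveI : Infinite (G₁ × G₂) :=
    Infinite.of_injective (fun k : ℕ => ((h.1 ^ k, h.2 ^ k) : G₁ × G₂))
      (by
        rcases hcomp' with hc | hc
        · exact fun a b hab => injective_pow_iff_not_isOfFinOrder.mpr hc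
            (congrArg Prod.fst hab)
        · exact fun a b hab => injective_pow_iff_not_isOfFinOrder.mpr hc
            (congrArg Prod.snd hab))
  exact not_finite (G₁ × G₂)
end
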